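/- arXiv:2312.01253 — 4 statements merged into one kernel-verified Lean document; each statement's English description precedes it below -/
import Mathlib

section
/- For every f ∈ ℝ, the expected squared magnitude of the Fourier transform of the FTN signal satisfies E[|x̂(f)|²] = P · T_x · |p̂(f)|². In other words, the power spectral density of the FTN signal with uncorrelated unit-variance symbols is P·|p̂(f)|², independent of the time-acceleration factor τ. -/
open MeasureTheory ProbabilityTheory Complex
open scoped FourierTransform ComplexConjugate

/-!
Translating the pulse by `nτT` multiplies its Fourier transform by the unimodular phase
`eₙ = e^{-2πi nτT f}`, so `x̂(f) = √(P·Tₓ/N) · p̂(f) · ∑ₙ xₙ eₙ`. Because the symbols are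
orthonormal in `L²(ℙ)`, `E|∑ₙ xₙ eₙ|² = ∑ₙ |eₙ|² = N` for any choice of delays, which is why
`τ` drops out.
-/

namespace Real

variable {E : Type*} [NormedAddCommGroup E] [NormedSpace ℂ E]

theorem fourier_comp_sub_right (g : ℝ → E) (a w : ℝ) :
    𝓕 (fun t => g (t - a)) w = (𝐞 (-(a * w)) : ℂ) • 𝓕 g w := by
  rw [fourier_real_eq, fourier_real_eq, ← integral_smul,
    ← integral_add_right_eq_self (fun v => 𝐞 (-(v * w)) • g (v - a)) a]
  congr 1 with v
  simp only [add_sub_cancel_right, Circle.smul_def, smul_smul, ← Circle.coe_mul,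
    ← AddChar.map_add_eq_mul]
  ring_nf

theorem fourier_sum_smul_comp_sub_right {ι : Type*} [Fintype ι] {g : ℝ → E}
    (hg : Integrable g) (c : ι → ℂ) (a : ι → ℝ) (w : ℝ) :
    𝓕 (fun t => ∑ i, c i • g (t - a i)) w = (∑ i, c i * 𝐞 (-(a i * w))) • 𝓕 g w := by
  have hint : ∀ i, Integrable fun v : ℝ => 𝐞 (-(v * w)) • c i • g (v - a i) := fun i => by
    simpa [Real.inner_apply, mul_comm w] using
      (fourierIntegral_convergent_iff (V := ℝ) w).2 ((hg.comp_sub_right (a i)).smul (c i))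
  rw [fourier_real_eq]
  simp only [Finset.smul_sum]
  rw [integral_finsetSum _ fun i _ => hint i, Finset.sum_smul]
  refine Finset.sum_congr rfl fun i _ => ?_
  simp only [smul_comm (𝐞 _) (c i), integral_smul, ← fourier_real_eq (fun v => g (v - a i)),
    fourier_comp_sub_right, mul_smul]

end Real

theorem integrable_mul_conj_of_memLp_two {Ω : Type*} [MeasurableSpace Ω] {μ : Measure Ω}
    {g h : Ω → ℂ} (hg : MemLp g 2 μ) (hh : MemLp h 2 μ) :
    Integrable (fun ω => g ω * conj (h ω)) μ := by
  refine (L2.integrable_inner (𝕜 := ℂ) (hh.toLp h) (hg.toLp g)).congr ?_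
  filter_upwards [hh.coeFn_toLp, hg.coeFn_toLp] with ω h1 h2
  simp only [RCLike.inner_apply, h1, h2]

theorem integral_norm_sq_sum_mul_of_orthonormal {Ω ι : Type*} [MeasurableSpace Ω]
    {μ : Measure Ω} [Fintype ι] [DecidableEq ι] {x : ι → Ω → ℂ}
    (hx2 : ∀ i, MemLp (x i) 2 μ)
    (hcov : ∀ i j, (∫ ω, x i ω * conj (x j ω) ∂μ) = if i = j then 1 else 0) (c : ι → ℂ) :
    ∫ ω, ‖∑ i, x i ω * c i‖ ^ 2 ∂μ = ∑ i, ‖c i‖ ^ 2 := by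
  have hint : ∀ i j, Integrable (fun ω => c i * conj (c j) * (x i ω * conj (x j ω))) μ :=
    fun i j => (integrable_mul_conj_of_memLp_two (hx2 i) (hx2 j)).const_mul _
  have hexpand : ∀ ω, ((‖∑ i, x i ω * c i‖ ^ 2 : ℝ) : ℂ)
      = ∑ i, ∑ j, c i * conj (c j) * (x i ω * conj (x j ω)) := fun ω => by
    push_cast
    rw [← mul_conj', map_sum, Finset.sum_mul_sum]
    simp only [map_mul]
    exact Finset.sum_congr rfl fun i _ => Finset.sum_congr rfl fun j _ => by ring
  apply Complex.ofReal_injective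
  rw [← integral_complex_ofReal]
  simp only [hexpand]
  rw [integral_finsetSum _ fun i _ => integrable_finsetSum _ fun j _ => hint i j]
  push_cast
  refine Finset.sum_congr rfl fun i _ => ?_
  rw [integral_finsetSum _ fun j _ => hint i j]
  simp [integral_const_mul, hcov, mul_conj']

theorem ftn_power_spectral_density_general
    {Ω : Type*} [MeasureSpace Ω]
    (p : ℝ → ℝ) (hp1 : Integrable p (volume : Measure ℝ))
    (P Tx τ T : ℝ) (hP : 0 < P) (hTx : 0 < Tx)
    (N : ℕ) (hN : 1 ≤ N)
    (x : Fin N → Ω → ℂ)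
    (hx2 : ∀ n, MemLp (x n) 2 (ℙ : Measure Ω))
    (hcov : ∀ n m, (∫ ω, x n ω * (starRingEnd ℂ) (x m ω))
        = if n = m then 1 else 0)
    (X : Ω → ℝ → ℂ)
    (hX : ∀ ω t, X ω t =
      (Real.sqrt (P * Tx / N) : ℂ) *
        ∑ n : Fin N, x n ω * (p (t - (n : ℕ) * (τ * T)) : ℂ))
    (f : ℝ) :
    (∫ ω, ‖𝓕 (X ω) f‖ ^ 2) = P * Tx * ‖𝓕 (fun t => (p t : ℂ)) f‖ ^ 2 := by
  have hpC : Integrable fun t => (p t : ℂ) := hp1.ofReal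
  set F := 𝓕 (fun t => (p t : ℂ)) f
  set e : Fin N → ℂ := fun n => 𝐞 (-((n : ℕ) * (τ * T) * f))
  have hXF (ω : Ω) : 𝓕 (X ω) f = (Real.sqrt (P * Tx / N) : ℂ) * F * ∑ n, x n ω * e n := by
    have hXω : X ω = fun t => ∑ n : Fin N,
        ((Real.sqrt (P * Tx / N) : ℂ) * x n ω) • (p (t - (n : ℕ) * (τ * T)) : ℂ) := by
      funext t
      simp only [hX, Finset.mul_sum, smul_eq_mul, mul_assoc]
    rw [hXω]
    refine (Real.fourier_sum_smul_comp_sub_right hpC _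
      (fun n : Fin N => (n : ℕ) * (τ * T)) f).trans ?_
    rw [smul_eq_mul, Finset.sum_mul, Finset.mul_sum]
    exact Finset.sum_congr rfl fun n _ => by simp only [e, F]; ring
  have hnorm (ω : Ω) :
      ‖𝓕 (X ω) f‖ ^ 2 = P * Tx / N * ‖F‖ ^ 2 * ‖∑ n, x n ω * e n‖ ^ 2 := by
    rw [hXF, norm_mul, norm_mul, Complex.norm_real, Real.norm_of_nonneg (Real.sqrt_nonneg _),
      mul_pow, mul_pow, Real.sq_sqrt (by positivity)]
  have hN0 : (N : ℝ) ≠ 0 := by exact_mod_cast Nat.one_le_iff_ne_zero.mp hN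
  calc ∫ ω, ‖𝓕 (X ω) f‖ ^ 2
      = P * Tx / N * ‖F‖ ^ 2 * ∑ n, ‖e n‖ ^ 2 := by
        simp_rw [hnorm]
        rw [integral_const_mul, integral_norm_sq_sum_mul_of_orthonormal hx2 hcov]
    _ = P * Tx * ‖F‖ ^ 2 := by
        simp only [e, Circle.norm_coe, one_pow, Finset.sum_const, Finset.card_univ,
          Fintype.card_fin, nsmul_eq_mul, mul_one]
        field_simp

/-- **Power spectral density of the FTN signal.**
Given a real-valued pulse `p ∈ L¹(ℝ) ∩ L²(ℝ)`, constants `P, Tx, τ, T > 0`, an integer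
`N ≥ 1`, and complex random variables `x 0, …, x (N-1)` with zero mean and
uncorrelated unit-variance entries (`E[x n * conj (x m)] = δ_{nm}`), the FTN signal is
`X ω t = √(P·Tx/N) · ∑ n, x n ω · p (t − n τ T)`.  Then for every frequency `f`, the
expected squared magnitude of the Fourier transform of the FTN signal satisfies
`E[‖X̂(f)‖²] = P · Tx · ‖p̂(f)‖²`; i.e. the PSD is `P·‖p̂(f)‖²`, independent of `τ`. -/
theorem ftn_power_spectral_density
    {Ω : Type*} [MeasureSpace Ω] [IsProbabilityMeasure (ℙ : Measure Ω)]
    (p : ℝ → ℝ) (hp1 : Integrable p (volume : Measure ℝ))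
    (hp2 : MemLp p 2 (volume : Measure ℝ))
    (P Tx τ T : ℝ) (hP : 0 < P) (hTx : 0 < Tx) (hτ : 0 < τ) (hT : 0 < T)
    (N : ℕ) (hN : 1 ≤ N)
    (x : Fin N → Ω → ℂ)
    (hx2 : ∀ n, MemLp (x n) 2 (ℙ : Measure Ω))
    (hmean : ∀ n, (∫ ω, x n ω) = 0)
    (hcov : ∀ n m, (∫ ω, x n ω * (starRingEnd ℂ) (x m ω))
        = if n = m then 1 else 0)
    (X : Ω → ℝ → ℂ)
    (hX : ∀ ω t, X ω t =
      (Real.sqrt (P * Tx / N) : ℂ) *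
        ∑ n : Fin N, x n ω * (p (t - (n : ℕ) * (τ * T)) : ℂ))
    (f : ℝ) :
    (∫ ω, ‖𝓕 (X ω) f‖ ^ 2) = P * Tx * ‖𝓕 (fun t => (p t : ℂ)) f‖ ^ 2 :=
  ftn_power_spectral_density_general p hp1 P Tx τ T hP hTx N hN x hx2 hcov X hX f
end

section
/- Fix σ > 0 and x ∈ ℂ with |x| = 1. If y = x + σ·w with w ~ CN(0,1), then the mean of the mismatched information density is E[i_M(x;y)] = ln(1 + 1/σ²). -/
/-!
Writing `y = x + σ w`, the mismatched information density is
`ln (1 + 1/σ²) - |w|² + |x + σ w|² / (1 + σ²)`, a quadratic polynomial in `Re w` and `Im w`.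
Its mean only involves `E[Re w] = E[Im w] = 0` and `E[|w|²] = 1`, which gives
`ln (1 + 1/σ²) + (|x|² - 1) / (1 + σ²)`.
-/

open MeasureTheory ProbabilityTheory

/-- The law of a standard complex Gaussian `w = a + i·b`, where `a` and `b` are
independent real Gaussians with mean `0` and variance `1/2`. -/
noncomputable def stdComplexGaussian : Measure ℂ :=
  Measure.map (fun q : ℝ × ℝ => (q.1 : ℂ) + (q.2 : ℂ) * Complex.I)
    ((gaussianReal 0 (1 / 2)).prod (gaussianReal 0 (1 / 2)))

/-- For `σ > 0` and `x, y ∈ ℂ`, `p_σ(y|x) = (1/(πσ²))·exp(−|y−x|²/σ²)` and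
`q_σ(y) = (1/(π(1+σ²)))·exp(−|y|²/(1+σ²))`; the mismatched information density is
`i_M(x;y) = ln (p_σ(y|x) / q_σ(y))`. -/
noncomputable def infoDensity (σ : ℝ) (x y : ℂ) : ℝ :=
  Real.log ((1 / (Real.pi * σ ^ 2) * Real.exp (-‖y - x‖ ^ 2 / σ ^ 2)) /
            (1 / (Real.pi * (1 + σ ^ 2)) * Real.exp (-‖y‖ ^ 2 / (1 + σ ^ 2))))

open scoped NNReal

lemma ProbabilityTheory.HasLaw.integrable_comp {Ω 𝓧 E : Type*} {mΩ : MeasurableSpace Ω}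
    {m𝓧 : MeasurableSpace 𝓧} [NormedAddCommGroup E] {X : Ω → 𝓧} {μ : Measure 𝓧}
    {P : Measure Ω} (hX : HasLaw X μ P) {f : 𝓧 → E} (hf : Integrable f μ) :
    Integrable (f ∘ X) P :=
  (hX.map_eq ▸ hf).comp_aemeasurable hX.aemeasurable

lemma integrable_id_gaussianReal (μ : ℝ) (v : ℝ≥0) : Integrable id (gaussianReal μ v) :=
  memLp_one_iff_integrable.mp (memLp_id_gaussianReal 1)

lemma integrable_sq_gaussianReal (μ : ℝ) (v : ℝ≥0) :
    Integrable (fun x ↦ x ^ 2) (gaussianReal μ v) :=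
  (memLp_id_gaussianReal 2).integrable_sq

lemma integral_sq_gaussianReal_zero (v : ℝ≥0) : ∫ x, x ^ 2 ∂gaussianReal 0 v = v := by
  rw [← variance_of_integral_eq_zero (X := fun x ↦ x) measurable_id'.aemeasurable
    integral_id_gaussianReal]
  exact variance_fun_id_gaussianReal

instance : IsProbabilityMeasure stdComplexGaussian :=
  Measure.isProbabilityMeasure_map (by fun_prop)

lemma hasLaw_re_stdComplexGaussian :
    HasLaw Complex.re (gaussianReal 0 (1 / 2)) stdComplexGaussian where
  map_eq := by
    rw [stdComplexGaussian, Measure.map_map Complex.measurable_re (by fun_prop)]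
    simp [Function.comp_def]

lemma hasLaw_im_stdComplexGaussian :
    HasLaw Complex.im (gaussianReal 0 (1 / 2)) stdComplexGaussian where
  map_eq := by
    rw [stdComplexGaussian, Measure.map_map Complex.measurable_im (by fun_prop)]
    simp [Function.comp_def]

@[fun_prop]
lemma integrable_re_stdComplexGaussian : Integrable Complex.re stdComplexGaussian :=
  hasLaw_re_stdComplexGaussian.integrable_comp (integrable_id_gaussianReal 0 _)

@[fun_prop]
lemma integrable_im_stdComplexGaussian : Integrable Complex.im stdComplexGaussian :=
  hasLaw_im_stdComplexGaussian.integrable_comp (integrable_id_gaussianReal 0 _)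

@[fun_prop]
lemma integrable_re_sq_stdComplexGaussian :
    Integrable (fun z : ℂ ↦ z.re ^ 2) stdComplexGaussian :=
  hasLaw_re_stdComplexGaussian.integrable_comp (integrable_sq_gaussianReal 0 _)

@[fun_prop]
lemma integrable_im_sq_stdComplexGaussian :
    Integrable (fun z : ℂ ↦ z.im ^ 2) stdComplexGaussian :=
  hasLaw_im_stdComplexGaussian.integrable_comp (integrable_sq_gaussianReal 0 _)

lemma integral_re_stdComplexGaussian : ∫ z, z.re ∂stdComplexGaussian = 0 :=
  hasLaw_re_stdComplexGaussian.integral_eq.trans integral_id_gaussianReal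

lemma integral_im_stdComplexGaussian : ∫ z, z.im ∂stdComplexGaussian = 0 :=
  hasLaw_im_stdComplexGaussian.integral_eq.trans integral_id_gaussianReal

lemma integral_re_sq_stdComplexGaussian : ∫ z, z.re ^ 2 ∂stdComplexGaussian = 1 / 2 := by
  rw [← Function.comp_def (· ^ 2) Complex.re,
    hasLaw_re_stdComplexGaussian.integral_comp (continuous_pow 2).aestronglyMeasurable,
    integral_sq_gaussianReal_zero]
  norm_num

lemma integral_im_sq_stdComplexGaussian : ∫ z, z.im ^ 2 ∂stdComplexGaussian = 1 / 2 := by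
  rw [← Function.comp_def (· ^ 2) Complex.im,
    hasLaw_im_stdComplexGaussian.integral_comp (continuous_pow 2).aestronglyMeasurable,
    integral_sq_gaussianReal_zero]
  norm_num

lemma integral_quadratic_stdComplexGaussian (a b c d : ℝ) :
    ∫ z, (a + b * z.re + c * z.im + d * (z.re ^ 2 + z.im ^ 2)) ∂stdComplexGaussian = a + d := by
  rw [integral_add (by fun_prop) (by fun_prop), integral_add (by fun_prop) (by fun_prop),
    integral_add (by fun_prop) (by fun_prop), integral_const_mul, integral_const_mul,
    integral_const_mul, integral_add (by fun_prop) (by fun_prop),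
    integral_re_stdComplexGaussian, integral_im_stdComplexGaussian,
    integral_re_sq_stdComplexGaussian, integral_im_sq_stdComplexGaussian]
  norm_num

lemma infoDensity_eq {σ : ℝ} (hσ : σ ≠ 0) (x y : ℂ) :
    infoDensity σ x y =
      Real.log (1 + 1 / σ ^ 2) - ‖y - x‖ ^ 2 / σ ^ 2 + ‖y‖ ^ 2 / (1 + σ ^ 2) := by
  rw [infoDensity, mul_div_mul_comm, Real.log_mul (by positivity) (by positivity),
    ← Real.exp_sub, Real.log_exp,
    show 1 / (Real.pi * σ ^ 2) / (1 / (Real.pi * (1 + σ ^ 2))) = 1 + 1 / σ ^ 2 by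
      field_simp; ring]
  ring

lemma infoDensity_add_mul {σ : ℝ} (hσ : σ ≠ 0) (x z : ℂ) :
    infoDensity σ x (x + σ * z) =
      (Real.log (1 + 1 / σ ^ 2) + ‖x‖ ^ 2 / (1 + σ ^ 2)) + 2 * σ * x.re / (1 + σ ^ 2) * z.re
        + 2 * σ * x.im / (1 + σ ^ 2) * z.im + (-1 / (1 + σ ^ 2)) * (z.re ^ 2 + z.im ^ 2) := by
  rw [infoDensity_eq hσ, add_sub_cancel_left]
  simp only [Complex.sq_norm, Complex.normSq_apply, Complex.add_re, Complex.add_im,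
    Complex.mul_re, Complex.mul_im, Complex.ofReal_re, Complex.ofReal_im]
  field_simp
  ring

theorem infoDensity_mean_general
    {Ω : Type*} [MeasureSpace Ω]
    (σ : ℝ) (hσ : 0 < σ) (x : ℂ) (hx : ‖x‖ = 1)
    (w : Ω → ℂ) (hw : Measurable w)
    (hlaw : Measure.map w (ℙ : Measure Ω) = stdComplexGaussian) :
    (∫ ω, infoDensity σ x (x + (σ : ℂ) * w ω)) = Real.log (1 + 1 / σ ^ 2) := by
  have hW : HasLaw w stdComplexGaussian := ⟨hw.aemeasurable, hlaw⟩
  calc ∫ ω, infoDensity σ x (x + σ * w ω)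
      = ∫ z, infoDensity σ x (x + σ * z) ∂stdComplexGaussian :=
        hW.integral_comp (f := fun z ↦ infoDensity σ x (x + σ * z))
          (by simp_rw [infoDensity_add_mul hσ.ne']; fun_prop)
    _ = Real.log (1 + 1 / σ ^ 2) := by
        simp_rw [infoDensity_add_mul hσ.ne', integral_quadratic_stdComplexGaussian, hx]
        ring

/-- **Mean of the mismatched information density.**  Fix `σ > 0` and `x ∈ ℂ` with
`|x| = 1`.  If `y = x + σ·w` with `w ~ CN(0,1)`, then
`E[i_M(x;y)] = ln(1 + 1/σ²)`. -/
theorem infoDensity_mean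
    {Ω : Type*} [MeasureSpace Ω] [IsProbabilityMeasure (ℙ : Measure Ω)]
    (σ : ℝ) (hσ : 0 < σ) (x : ℂ) (hx : ‖x‖ = 1)
    (w : Ω → ℂ) (hw : Measurable w)
    (hlaw : Measure.map w (ℙ : Measure Ω) = stdComplexGaussian) :
    (∫ ω, infoDensity σ x (x + (σ : ℂ) * w ω)) = Real.log (1 + 1 / σ ^ 2) :=
  infoDensity_mean_general σ hσ x hx w hw hlaw
end

section
/- Let N ≥ 1, let σ_0, …, σ_{N−1} > 0, and let x ∈ ℂᴺ satisfy |x_n| = 1 for all n. Let y_0, …, y_{N−1} be independent with y_n = x_n + σ_n·w'_n, where w'_0, …, w'_{N−1} are i.i.d. CN(0,1). Then the random variable (1/N)·∑_{n=0}^{N−1} (1/(1+σ_n²))·|y_n − (1+σ_n²)·x_n|²/σ_n² has the same distribution as (1/N)·∑_{n=0}^{N−1} (1/(1+σ_n²))·|w_n + σ_n|², where w_0, …, w_{N−1} are i.i.d. CN(0,1); in particular, this distribution (hence the missed-detection probability in the meta-converse bound) does not depend on the choice of x. -/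
/-!
With `c_n = -conj x_n`, a unit complex number, `y_n - (1 + σ_n²) x_n = -σ_n x_n (c_n w'_n + σ_n)`,
so the first statistic is the second one evaluated at `(c_n w'_n)_n` instead of `(w_n)_n`.
The law `CN(0,1)` has the radial characteristic function `exp (-|t|²/4)`, hence is invariant
under multiplication by unit complex numbers; by independence, `(c_n w'_n)_n` and `(w_n)_n`
both have law `CN(0,1)^⊗N`.
-/

open MeasureTheory ProbabilityTheory

open ComplexConjugate
open scoped RealInnerProductSpace

instance isProbabilityMeasure_stdComplexGaussian : IsProbabilityMeasure stdComplexGaussian :=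
  Measure.isProbabilityMeasure_map (by fun_prop)

lemma charFun_stdComplexGaussian (t : ℂ) :
    charFun stdComplexGaussian t = Complex.exp (-(‖t‖ ^ 2 / 4 : ℝ)) := by
  have hinner (a b : ℝ) : (⟪(a : ℂ) + b * Complex.I, t⟫ : ℂ) = t.re * a + t.im * b := by
    simp [Complex.inner]
  rw [charFun_apply, stdComplexGaussian, integral_map (by fun_prop) (by fun_prop)]
  simp_rw [hinner, add_mul, Complex.exp_add]
  rw [integral_prod_mul (fun a : ℝ => Complex.exp (t.re * a * Complex.I))
    (fun b : ℝ => Complex.exp (t.im * b * Complex.I)), ← charFun_apply_real, ← charFun_apply_real,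
    charFun_gaussianReal, charFun_gaussianReal, ← Complex.exp_add, Complex.sq_norm,
    Complex.normSq_apply]
  congr 1
  push_cast
  ring

lemma charFun_map_mul_left (μ : Measure ℂ) (c t : ℂ) :
    charFun (μ.map (c * ·)) t = charFun μ (conj c * t) := by
  rw [charFun_apply, charFun_apply, integral_map (by fun_prop) (by fun_prop)]
  congr with z
  simp only [Complex.inner, map_mul]
  ring_nf

lemma stdComplexGaussian_map_mul_left {c : ℂ} (hc : ‖c‖ = 1) :
    stdComplexGaussian.map (c * ·) = stdComplexGaussian := by
  have : IsProbabilityMeasure (stdComplexGaussian.map (c * ·)) :=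
    Measure.isProbabilityMeasure_map (by fun_prop)
  refine Measure.ext_of_charFun (funext fun t => ?_)
  rw [charFun_map_mul_left, charFun_stdComplexGaussian, charFun_stdComplexGaussian, norm_mul,
    Complex.norm_conj, hc, one_mul]

lemma pi_stdComplexGaussian_map_mul_left {ι : Type*} [Fintype ι] {c : ι → ℂ}
    (hc : ∀ i, ‖c i‖ = 1) :
    (Measure.pi fun _ : ι => stdComplexGaussian).map (fun v i => c i * v i)
      = Measure.pi fun _ : ι => stdComplexGaussian :=
  (measurePreserving_pi _ _ fun i =>
    ⟨measurable_const_mul (c i), stdComplexGaussian_map_mul_left (hc i)⟩).map_eq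

lemma map_fun_eq_pi_stdComplexGaussian {ι Ω : Type*} [Fintype ι] [MeasurableSpace Ω]
    {μ : Measure Ω} [IsProbabilityMeasure μ] {X : ι → Ω → ℂ} (hX : ∀ i, AEMeasurable (X i) μ)
    (hindep : iIndepFun X μ) (hlaw : ∀ i, μ.map (X i) = stdComplexGaussian) :
    μ.map (fun ω i => X i ω) = Measure.pi fun _ : ι => stdComplexGaussian := by
  rw [hindep.map_fun_eq_pi_map hX]
  simp_rw [hlaw]

lemma sq_norm_sub_div_sq_eq {s : ℝ} (hs : s ≠ 0) {ξ : ℂ} (hξ : ‖ξ‖ = 1) (w : ℂ) :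
    ‖(ξ + s * w) - ((1 + s ^ 2 : ℝ) : ℂ) * ξ‖ ^ 2 / s ^ 2 = ‖-conj ξ * w + s‖ ^ 2 := by
  have hξξ : conj ξ * ξ = 1 := by
    rw [← Complex.normSq_eq_conj_mul_self, Complex.normSq_eq_norm_sq, hξ]; norm_num
  have hfactor : (ξ + s * w) - ((1 + s ^ 2 : ℝ) : ℂ) * ξ = s * -ξ * (-conj ξ * w + s) := by
    push_cast; linear_combination -(s : ℂ) * w * hξξ
  rw [hfactor, norm_mul, norm_mul, norm_neg, hξ, Complex.norm_real, Real.norm_eq_abs, mul_one,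
    mul_pow, sq_abs]
  field_simp

theorem missedDetection_sum_statistic_law_general
    {Ω₁ Ω₂ : Type*} [MeasureSpace Ω₁] [MeasureSpace Ω₂]
    [IsProbabilityMeasure (ℙ : Measure Ω₁)] [IsProbabilityMeasure (ℙ : Measure Ω₂)]
    (N : ℕ) (σ : Fin N → ℝ) (hσ : ∀ n, 0 < σ n)
    (x : Fin N → ℂ) (hx : ∀ n, ‖x n‖ = 1)
    (W' : Fin N → Ω₁ → ℂ) (hW'm : ∀ n, Measurable (W' n))
    (hW'indep : iIndepFun W'
      (ℙ : Measure Ω₁))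
    (hW'law : ∀ n, Measure.map (W' n) (ℙ : Measure Ω₁) = stdComplexGaussian)
    (W : Fin N → Ω₂ → ℂ) (hWm : ∀ n, Measurable (W n))
    (hWindep : iIndepFun W
      (ℙ : Measure Ω₂))
    (hWlaw : ∀ n, Measure.map (W n) (ℙ : Measure Ω₂) = stdComplexGaussian) :
    Measure.map
        (fun ω => (1 / N : ℝ) * ∑ n : Fin N, (1 / (1 + (σ n) ^ 2)) *
          (‖(x n + (σ n : ℂ) * W' n ω) - ((1 + (σ n) ^ 2 : ℝ) : ℂ) * x n‖ ^ 2
            / (σ n) ^ 2))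
        (ℙ : Measure Ω₁)
      = Measure.map
        (fun ω => (1 / N : ℝ) * ∑ n : Fin N, (1 / (1 + (σ n) ^ 2)) *
          ‖W n ω + (σ n : ℂ)‖ ^ 2)
        (ℙ : Measure Ω₂) := by
  set F : (Fin N → ℂ) → ℝ := fun v =>
    (1 / N : ℝ) * ∑ n : Fin N, (1 / (1 + (σ n) ^ 2)) * ‖v n + (σ n : ℂ)‖ ^ 2
  have hF : Measurable F := by fun_prop
  have hW'vec : Measurable fun ω n => W' n ω := measurable_pi_iff.mpr hW'm
  have hWvec : Measurable fun ω n => W n ω := measurable_pi_iff.mpr hWm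
  calc _ = ((Measure.map (fun ω n => W' n ω) ℙ).map fun v n => -conj (x n) * v n).map F := by
        rw [Measure.map_map (by fun_prop) hW'vec, Measure.map_map hF (by fun_prop)]
        congr with ω
        simp_rw [Function.comp_apply, F, sq_norm_sub_div_sq_eq (hσ _).ne' (hx _)]
    _ = (Measure.map (fun ω n => W n ω) ℙ).map F := by
        rw [map_fun_eq_pi_stdComplexGaussian (fun n => (hW'm n).aemeasurable) hW'indep hW'law,
          pi_stdComplexGaussian_map_mul_left fun n => by rw [norm_neg, Complex.norm_conj, hx n],
          map_fun_eq_pi_stdComplexGaussian (fun n => (hWm n).aemeasurable) hWindep hWlaw]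
    _ = _ := Measure.map_map hF hWvec

/-- **The missed-detection statistic of the meta-converse bound does not depend on the
codeword.**  Let `N ≥ 1`, `σ_n > 0`, and `x ∈ ℂᴺ` with `|x_n| = 1` for all `n`.  Let
`y_n = x_n + σ_n·w'_n` with `w'_0, …, w'_{N−1}` i.i.d. `CN(0,1)`.  Then
`(1/N)·∑ₙ (1/(1+σ_n²))·|y_n − (1+σ_n²)·x_n|²/σ_n²` has the same distribution as
`(1/N)·∑ₙ (1/(1+σ_n²))·|w_n + σ_n|²` with `w_0, …, w_{N−1}` i.i.d. `CN(0,1)`;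
in particular this distribution does not depend on the choice of `x`. -/
theorem missedDetection_sum_statistic_law
    {Ω₁ Ω₂ : Type*} [MeasureSpace Ω₁] [MeasureSpace Ω₂]
    [IsProbabilityMeasure (ℙ : Measure Ω₁)] [IsProbabilityMeasure (ℙ : Measure Ω₂)]
    (N : ℕ) (hN : 1 ≤ N) (σ : Fin N → ℝ) (hσ : ∀ n, 0 < σ n)
    (x : Fin N → ℂ) (hx : ∀ n, ‖x n‖ = 1)
    (W' : Fin N → Ω₁ → ℂ) (hW'm : ∀ n, Measurable (W' n))
    (hW'indep : iIndepFun W'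
      (ℙ : Measure Ω₁))
    (hW'law : ∀ n, Measure.map (W' n) (ℙ : Measure Ω₁) = stdComplexGaussian)
    (W : Fin N → Ω₂ → ℂ) (hWm : ∀ n, Measurable (W n))
    (hWindep : iIndepFun W
      (ℙ : Measure Ω₂))
    (hWlaw : ∀ n, Measure.map (W n) (ℙ : Measure Ω₂) = stdComplexGaussian) :
    Measure.map
        (fun ω => (1 / N : ℝ) * ∑ n : Fin N, (1 / (1 + (σ n) ^ 2)) *
          (‖(x n + (σ n : ℂ) * W' n ω) - ((1 + (σ n) ^ 2 : ℝ) : ℂ) * x n‖ ^ 2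
            / (σ n) ^ 2))
        (ℙ : Measure Ω₁)
      = Measure.map
        (fun ω => (1 / N : ℝ) * ∑ n : Fin N, (1 / (1 + (σ n) ^ 2)) *
          ‖W n ω + (σ n : ℂ)‖ ^ 2)
        (ℙ : Measure Ω₂) :=
  missedDetection_sum_statistic_law_general N σ hσ x hx W' hW'm hW'indep hW'law W hWm hWindep hWlaw
end

section
/- Let N ≥ 1, N₀ > 0, B > 0, ε ∈ (0,1), and μ_n ∈ [0,1] for 0 ≤ n ≤ N−1. Consider the feasible set S = {P ∈ ℝᴺ : P_n ≥ 0 for all n, ∑_n P_n·(1−μ_n) ≤ ε·B, and ∑_n P_n ≤ B}. Suppose θ₁ > 0 and θ₂ > 0 are such that the vector P* with entries P*_n = max{0, B/(θ₁(1−μ_n)+θ₂) − N₀} satisfies both constraints with equality: ∑_n P*_n·(1−μ_n) = ε·B and ∑_n P*_n = B. Then P* maximizes the objective F(P) = ∑_{n=0}^{N−1} log₂(1 + P_n/N₀) over S, i.e., F(P) ≤ F(P*) for every P ∈ S. -/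
/-!
Concavity of `log` bounds each coordinate's gain by its tangent line at `P*`, whose slope
`1 / (N₀ + P*_n)` is at most the Lagrange weight `(θ₁ (1 - μ_n) + θ₂) / B` (with equality where
`P*_n > 0`). Summing, the total gain of any `Q` over `P*` is at most
`(θ₁ (∑ Q_n (1 - μ_n) - ε B) + θ₂ (∑ Q_n - B)) / B`, which is nonpositive on the feasible set
because `P*` makes both constraints tight.
-/

open Real Finset

lemma Real.log_sub_log_le_div {x y : ℝ} (hx : 0 < x) (hy : 0 < y) :
    log x - log y ≤ (x - y) / y := by
  have h := log_le_sub_one_of_pos (div_pos hx hy)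
  rw [log_div hx.ne' hy.ne', div_sub_one hy.ne'] at h
  exact h

lemma log_one_add_div_sub_le {N₀ P Q : ℝ} (hN₀ : 0 < N₀) (hP : 0 ≤ P) (hQ : 0 ≤ Q) :
    log (1 + Q / N₀) - log (1 + P / N₀) ≤ (Q - P) / (N₀ + P) := by
  have key := log_sub_log_le_div (x := 1 + Q / N₀) (y := 1 + P / N₀) (by positivity)
    (by positivity)
  have hslope : (1 + Q / N₀ - (1 + P / N₀)) / (1 + P / N₀) = (Q - P) / (N₀ + P) := by
    field_simp
    ring
  rwa [hslope] at key

lemma log_one_add_div_sub_le_of_waterlevel {N₀ a Q : ℝ} (hN₀ : 0 < N₀) (ha : 0 < a)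
    (hQ : 0 ≤ Q) :
    log (1 + Q / N₀) - log (1 + max 0 (a - N₀) / N₀) ≤ (Q - max 0 (a - N₀)) / a := by
  refine (log_one_add_div_sub_le hN₀ (le_max_left _ _) hQ).trans ?_
  rcases le_total a N₀ with hlow | hhigh
  · rw [max_eq_left (by linarith), add_zero, sub_zero]
    exact div_le_div_of_nonneg_left hQ ha hlow
  · rw [max_eq_right (by linarith), add_sub_cancel]

theorem waterfilling_optimal_general
    (N : ℕ) (N₀ B ε : ℝ) (hN₀ : 0 < N₀) (hB : 0 < B)
    (μ : Fin N → ℝ) (hμ : ∀ n, μ n ∈ Set.Icc (0 : ℝ) 1)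
    (θ₁ θ₂ : ℝ) (hθ₁ : 0 < θ₁) (hθ₂ : 0 < θ₂)
    (Pstar : Fin N → ℝ)
    (hPstar : ∀ n, Pstar n = max 0 (B / (θ₁ * (1 - μ n) + θ₂) - N₀))
    (heq1 : ∑ n, Pstar n * (1 - μ n) = ε * B)
    (heq2 : ∑ n, Pstar n = B) :
    ∀ Q : Fin N → ℝ, (∀ n, 0 ≤ Q n) →
      (∑ n, Q n * (1 - μ n)) ≤ ε * B → (∑ n, Q n) ≤ B →
      (∑ n, Real.logb 2 (1 + Q n / N₀)) ≤ ∑ n, Real.logb 2 (1 + Pstar n / N₀) := by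
  intro Q hQ hQ1 hQ2
  set c : Fin N → ℝ := fun n ↦ θ₁ * (1 - μ n) + θ₂
  have hc : ∀ n, 0 < c n := fun n ↦ by
    have := sub_nonneg.2 (hμ n).2
    positivity
  have hgain : ∀ n, log (1 + Q n / N₀) - log (1 + Pstar n / N₀) ≤ (Q n - Pstar n) * c n / B :=
    fun n ↦ by
      have h := log_one_add_div_sub_le_of_waterlevel hN₀ (div_pos hB (hc n)) (hQ n)
      rwa [← hPstar, div_div_eq_mul_div] at h
  have hdual : ∑ n, (Q n - Pstar n) * c n
      = θ₁ * (∑ n, Q n * (1 - μ n) - ∑ n, Pstar n * (1 - μ n))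
        + θ₂ * (∑ n, Q n - ∑ n, Pstar n) := by
    simp only [c, ← sum_sub_distrib, mul_sum, ← sum_add_distrib]
    exact sum_congr rfl fun n _ ↦ by ring
  have hlog : ∑ n, log (1 + Q n / N₀) ≤ ∑ n, log (1 + Pstar n / N₀) := by
    have htotal := sum_le_sum fun n (_ : n ∈ univ) ↦ hgain n
    rw [sum_sub_distrib, ← sum_div, hdual, heq1, heq2] at htotal
    have : (θ₁ * (∑ n, Q n * (1 - μ n) - ε * B) + θ₂ * (∑ n, Q n - B)) / B ≤ 0 :=
      div_nonpos_of_nonpos_of_nonneg (by nlinarith) hB.le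
    linarith
  simp only [logb, ← sum_div]
  exact div_le_div_of_nonneg_right hlog (log_nonneg one_le_two)

/-- **Optimality of the water-filling power allocation.**
Let `N ≥ 1`, `N₀ > 0`, `B > 0`, `ε ∈ (0,1)`, and `μ_n ∈ [0,1]`.  Consider the feasible
set of power allocations `P ∈ ℝᴺ` with `P_n ≥ 0`, `∑ P_n (1−μ_n) ≤ ε B`, and
`∑ P_n ≤ B`.  Suppose `θ₁ > 0` and `θ₂ > 0` are such that the water-filling vector
`P*_n = max {0, B/(θ₁(1−μ_n)+θ₂) − N₀}` satisfies both constraints with equality.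
Then `P*` maximizes `F(P) = ∑ log₂(1 + P_n/N₀)` over the feasible set. -/
theorem waterfilling_optimal
    (N : ℕ) (hN : 1 ≤ N) (N₀ B ε : ℝ) (hN₀ : 0 < N₀) (hB : 0 < B)
    (hε : ε ∈ Set.Ioo (0 : ℝ) 1)
    (μ : Fin N → ℝ) (hμ : ∀ n, μ n ∈ Set.Icc (0 : ℝ) 1)
    (θ₁ θ₂ : ℝ) (hθ₁ : 0 < θ₁) (hθ₂ : 0 < θ₂)
    (Pstar : Fin N → ℝ)
    (hPstar : ∀ n, Pstar n = max 0 (B / (θ₁ * (1 - μ n) + θ₂) - N₀))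
    (heq1 : ∑ n, Pstar n * (1 - μ n) = ε * B)
    (heq2 : ∑ n, Pstar n = B) :
    ∀ Q : Fin N → ℝ, (∀ n, 0 ≤ Q n) →
      (∑ n, Q n * (1 - μ n)) ≤ ε * B → (∑ n, Q n) ≤ B →
      (∑ n, Real.logb 2 (1 + Q n / N₀)) ≤ ∑ n, Real.logb 2 (1 + Pstar n / N₀) :=
  waterfilling_optimal_general N N₀ B ε hN₀ hB μ hμ θ₁ θ₂ hθ₁ hθ₂ Pstar hPstar heq1 heq2
end
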